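/- If φ : F_k → F_k is a surjective homomorphism between free groups of the same finite rank k, then φ is an isomorphism. -/

import Mathlib

/-!
Free groups are residually finite. A nontrivial element is a nonempty reduced word `L` of
length `n`; send each generator to a permutation of `{0, …, n}` such that, reading `L` from the
right, the letter at position `i` moves the point `i + 1` to `i`. Reducedness makes the partial
maps this prescribes for a single generator injective, so they extend to permutations, and the
image of the word then moves `n` to `0`.

A finitely generated residually finite group `G` is Hopfian: if `φ : G →* G` is surjective and
`H` is a normal subgroup of finite index, precomposition with `φ` is an injective self-map of
the finite set `G →* G ⧸ H`, hence surjective. Thus the quotient map `G → G ⧸ H` factors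
through `φ`, and its kernel `H` contains `ker φ`; these `H` intersect trivially.
-/

open Function Equiv

theorem List.prod_map_apply_last_eq {β X : Type*} (f : β → Equiv.Perm X) :
    ∀ (L : List β) (p : Fin (L.length + 1) → X),
      (∀ i : Fin L.length, f L[i] (p i.succ) = p i.castSucc) →
        (L.map f).prod (p (Fin.last _)) = p 0
  | [], _, _ => rfl
  | b :: L, p, h => by
    rw [List.map_cons, List.prod_cons, Equiv.Perm.mul_apply]
    have := List.prod_map_apply_last_eq f L (fun i => p i.succ) (fun i => h i.succ)
    exact (congrArg (f b) this).trans (h 0)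

namespace FreeGroup

variable {α : Type*} {L : List (α × Bool)}

theorem IsReduced.snd_eq_of_fst_eq (hL : IsReduced L) {i j : Fin L.length}
    (hij : (j : ℕ) = i + 1) (hfst : L[i].1 = L[j].1) : L[i].2 = L[j].2 := by
  obtain ⟨j, hj⟩ := j
  simp only at hij
  subst hij
  exact List.isChain_iff_getElem.mp hL i hj hfst

/-- The permutation of the generator `L[i].1` will send `letterEndpoint L true i` to
`letterEndpoint L false i`, so that the letter `L[i]`, with its sign, sends `i + 1` to `i`. -/
def letterEndpoint (L : List (α × Bool)) (c : Bool) (i : Fin L.length) :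
    Fin (L.length + 1) :=
  if L[i].2 = c then i.succ else i.castSucc

theorem IsReduced.injOn_letterEndpoint (hL : IsReduced L) (c : Bool) (a : α) :
    Set.InjOn (letterEndpoint L c) {i | L[i].1 = a} := by
  intro i hi j hj hij
  have hfst : L[i].1 = L[j].1 := hi.trans hj.symm
  unfold letterEndpoint at hij
  split_ifs at hij with hbi hbj hbj <;>
    simp only [Fin.ext_iff, Fin.val_succ, Fin.val_castSucc, add_left_inj] at hij
  · exact Fin.ext hij
  · exact absurd (hL.snd_eq_of_fst_eq hij.symm hfst) (by rw [hbi]; exact Ne.symm hbj)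
  · exact absurd (hL.snd_eq_of_fst_eq hij hfst.symm) (by rw [hbj]; exact Ne.symm hbi)
  · exact Fin.ext hij

theorem IsReduced.exists_perm_letterEndpoint (hL : IsReduced L) :
    ∃ σ : α → Perm (Fin (L.length + 1)),
      ∀ i, σ L[i].1 (letterEndpoint L true i) = letterEndpoint L false i := by
  have (a : α) : ∃ σ : Perm (Fin (L.length + 1)), ∀ i : {i : Fin L.length // L[i].1 = a},
      σ (letterEndpoint L true i) = letterEndpoint L false i :=
    Perm.exists_extending_pair _ _ (hL.injOn_letterEndpoint true a).injective
      (hL.injOn_letterEndpoint false a).injective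
  choose σ hσ using this
  exact ⟨σ, fun i => hσ _ ⟨i, rfl⟩⟩

theorem IsReduced.exists_lift_mk_apply_last (hL : IsReduced L) :
    ∃ σ : α → Perm (Fin (L.length + 1)), lift σ (mk L) (Fin.last _) = 0 := by
  obtain ⟨σ, hσ⟩ := hL.exists_perm_letterEndpoint
  refine ⟨σ, ?_⟩
  rw [lift_mk]
  refine List.prod_map_apply_last_eq _ L id fun i => ?_
  have hi := hσ i
  unfold letterEndpoint at hi
  cases hb : L[i].2 <;> simp only [hb, if_true, cond_true, cond_false, id] at hi ⊢
  · exact Perm.inv_eq_iff_eq.mpr hi.symm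
  · exact hi

instance residuallyFinite : Group.ResiduallyFinite (FreeGroup α) := by
  classical
  refine Group.residuallyFinite_of_forall_exists_finite_monoidHom fun g hg => ?_
  obtain ⟨σ, hσ⟩ := (isReduced_toWord (x := g)).exists_lift_mk_apply_last
  refine ⟨_, inferInstance, inferInstance, lift σ, fun h => ?_⟩
  rw [mk_toWord, h, Perm.one_apply, Fin.last_eq_zero_iff] at hσ
  exact hg (toWord_eq_nil_iff.mp (List.length_eq_zero_iff.mp hσ))

end FreeGroup

instance MonoidHom.finite_of_fg {G H : Type*} [Group G] [Group.FG G] [Monoid H] [Finite H] :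
    Finite (G →* H) := by
  obtain ⟨S, hS, hSfin⟩ := Group.fg_iff.mp ‹_›
  have := hSfin.to_subtype
  exact Finite.of_injective (fun χ : G →* H => fun s : S => χ s) fun χ ψ h =>
    MonoidHom.eq_of_eqOn_dense hS fun x hx => congrFun h ⟨x, hx⟩

theorem Group.ResiduallyFinite.injective_of_surjective {G : Type*} [Group G] [Group.FG G]
    [Group.ResiduallyFinite G] {φ : G →* G} (hφ : Surjective φ) : Injective φ := by
  refine (injective_iff_map_eq_one φ).mpr fun g hg => ?_
  by_contra hne
  obtain ⟨H, hgH⟩ := exists_finiteIndexNormalSubgroup_notMem g hne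
  have hcomp : Injective fun χ : G →* G ⧸ H.toSubgroup => χ.comp φ :=
    fun _ _ h => (MonoidHom.cancel_right hφ).mp h
  obtain ⟨χ, hχ⟩ := Finite.injective_iff_surjective.mp hcomp (QuotientGroup.mk' H.toSubgroup)
  apply hgH
  rw [← FiniteIndexNormalSubgroup.mem_toSubgroup_iff, ← QuotientGroup.eq_one_iff,
    ← QuotientGroup.mk'_apply, ← hχ, MonoidHom.comp_apply, hg, map_one]

/-- A surjective homomorphism between free groups of the same finite rank is an isomorphism. -/
theorem freeGroup_surjective_endo_isomorphism (k : ℕ)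
    (φ : FreeGroup (Fin k) →* FreeGroup (Fin k)) (hφ : Function.Surjective φ) :
    ∃ e : FreeGroup (Fin k) ≃* FreeGroup (Fin k), (e : FreeGroup (Fin k) →* FreeGroup (Fin k)) = φ :=
  ⟨MulEquiv.ofBijective φ ⟨Group.ResiduallyFinite.injective_of_surjective hφ, hφ⟩, rfl⟩
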